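/- Suppose V is invariant under the reflection 𝔰(u₁,u₂,…,u_k) = (-u₁,u₂,…,u_k) and σ± = (±1,0,…,0) are zeros of V. Then for every q ∈ X(σ⁻, σ⁺) there exists a symmetric curve q_sym ∈ X(σ⁻, σ⁺) with q_sym(-t) = 𝔰(q_sym(t)) for all t, whose energy satisfies E(q_sym) ≤ E(q). -/

import Mathlib

open MeasureTheory Filter intervalIntegral
open scoped RealInnerProductSpace Topology

noncomputable section

variable {k : ℕ}

/-- Absolutely continuous curve whose (a.e.) derivative is `deriv q`
(the model for `H¹_loc(ℝ, ℝᵏ)` curves). -/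
def AC (q : ℝ → EuclideanSpace ℝ (Fin k)) : Prop :=
  MeasureTheory.LocallyIntegrable (deriv q) volume ∧
    ∀ a b : ℝ, q b - q a = ∫ t in a..b, deriv q t

/-- Energy density `½|q'(t)|² + V(q(t))`. -/
def Ed (V : EuclideanSpace ℝ (Fin k) → ℝ) (q : ℝ → EuclideanSpace ℝ (Fin k)) (t : ℝ) : ℝ :=
  (1 / 2) * ‖deriv q t‖ ^ 2 + V (q t)

/-- Finite energy: the energy density is integrable over `ℝ`. -/
def FiniteEnergy (V : EuclideanSpace ℝ (Fin k) → ℝ) (q : ℝ → EuclideanSpace ℝ (Fin k)) : Prop :=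
  Integrable (Ed V q) volume

/-- The energy `E(q) = ∫ ½|q'|² + V(q)`. -/
def Energy (V : EuclideanSpace ℝ (Fin k) → ℝ) (q : ℝ → EuclideanSpace ℝ (Fin k)) : ℝ :=
  ∫ t, Ed V q t

/-- The space `X(σᵢ, σⱼ)` of finite-energy curves from `σᵢ` to `σⱼ`. -/
def InX (V : EuclideanSpace ℝ (Fin k) → ℝ) (σi σj : EuclideanSpace ℝ (Fin k))
    (q : ℝ → EuclideanSpace ℝ (Fin k)) : Prop :=
  AC q ∧ FiniteEnergy V q ∧ Tendsto q atBot (𝓝 σi) ∧ Tendsto q atTop (𝓝 σj)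

/-- Membership in `H¹(ℝ, ℝᵏ)`. -/
def MemH1 (v : ℝ → EuclideanSpace ℝ (Fin k)) : Prop :=
  AC v ∧ MemLp v 2 volume ∧ MemLp (deriv v) 2 volume

/-- The `H¹(ℝ, ℝᵏ)` norm. -/
def H1norm (v : ℝ → EuclideanSpace ℝ (Fin k)) : ℝ :=
  Real.sqrt ((∫ t, ‖v t‖ ^ 2) + ∫ t, ‖deriv v t‖ ^ 2)

variable [NeZero k]

/-- The reflection `𝔰` negating the first coordinate. -/
def refl1 (u : EuclideanSpace ℝ (Fin k)) : EuclideanSpace ℝ (Fin k) :=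
  WithLp.toLp 2 (fun i => if i = 0 then -u i else u i)


/-!
The first coordinate of `q` runs from `-1` to `1`, so after a time shift `q 0` lies on the
hyperplane `u 0 = 0` fixed by `𝔰`. Gluing `q` on `(-∞, 0]` to its mirror image `t ↦ 𝔰 (q (-t))`
on `(0, ∞)`, or the mirror image on `(-∞, 0]` to `q` on `(0, ∞)`, gives two `𝔰`-symmetric curves
in `X(σ⁻, σ⁺)` whose energies are twice the energy of `q` on `(-∞, 0]` and on `(0, ∞)`
respectively. They add up to `2 E(q)`, so one of them has energy at most `E(q)`.
-/

open Set

section Curves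

variable {n : ℕ} {q : ℝ → EuclideanSpace ℝ (Fin n)}

lemma deriv_continuousLinearEquiv_comp
    (L : EuclideanSpace ℝ (Fin n) ≃L[ℝ] EuclideanSpace ℝ (Fin n))
    (q : ℝ → EuclideanSpace ℝ (Fin n)) (t : ℝ) :
    deriv (fun s => L (q s)) t = L (deriv q t) := by
  change fderiv ℝ (L ∘ q) t 1 = L (fderiv ℝ q t 1)
  rw [L.comp_fderiv]
  rfl

namespace AC

lemma intervalIntegrable (hq : AC q) (a b : ℝ) : IntervalIntegrable (deriv q) volume a b :=
  (hq.1.integrableOn_isCompact isCompact_uIcc).intervalIntegrable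

lemma continuous (hq : AC q) : Continuous q := by
  have hprim : q = fun b => q 0 + ∫ t in (0 : ℝ)..b, deriv q t :=
    funext fun b => by rw [← hq.2 0 b]; abel
  rw [hprim]
  exact continuous_const.add (continuous_primitive hq.intervalIntegrable 0)

lemma comp_add_const (hq : AC q) (c : ℝ) : AC (fun t => q (t + c)) := by
  have hd : deriv (fun t => q (t + c)) = fun t => deriv q (t + c) :=
    funext fun t => deriv_comp_add_const _ _ _
  refine ⟨?_, fun a b => ?_⟩
  · rw [hd]
    have := (locallyIntegrable_map_homeomorph (Homeomorph.addRight c) (f := deriv q)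
      (μ := volume)).1
    rw [Homeomorph.coe_addRight, map_add_right_eq_self] at this
    exact this hq.1
  · rw [hd, integral_comp_add_right]
    exact hq.2 _ _

lemma comp_neg (hq : AC q) : AC (fun t => q (-t)) := by
  have hd : deriv (fun t => q (-t)) = fun t => -deriv q (-t) :=
    funext fun t => deriv_comp_neg _ _
  refine ⟨?_, fun a b => ?_⟩
  · rw [hd]
    have := (locallyIntegrable_map_homeomorph (Homeomorph.neg ℝ) (f := deriv q) (μ := volume)).1
    rw [Homeomorph.coe_neg, Measure.map_neg_eq_self] at this
    exact (this hq.1).neg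
  · rw [hd, intervalIntegral.integral_neg, integral_comp_neg, ← hq.2, neg_sub]

lemma continuousLinearEquiv_comp (hq : AC q)
    (L : EuclideanSpace ℝ (Fin n) ≃L[ℝ] EuclideanSpace ℝ (Fin n)) : AC (fun t => L (q t)) := by
  have hd : deriv (fun t => L (q t)) = fun t => L (deriv q t) :=
    funext (deriv_continuousLinearEquiv_comp L q)
  refine ⟨?_, fun a b => ?_⟩
  · rw [hd, ← locallyIntegrableOn_univ]
    exact (L : EuclideanSpace ℝ (Fin n) →L[ℝ] EuclideanSpace ℝ (Fin n)).locallyIntegrableOn_comp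
      (locallyIntegrableOn_univ.2 hq.1)
  · simp only [hd]
    have hcomm := (L : EuclideanSpace ℝ (Fin n) →L[ℝ] EuclideanSpace ℝ (Fin n))
      |>.intervalIntegral_comp_comm (hq.intervalIntegrable a b)
    simp only [ContinuousLinearEquiv.coe_coe] at hcomm
    rw [hcomm, ← map_sub, hq.2]

end AC

end Curves

def glue {α : Type*} (f g : ℝ → α) : ℝ → α := (Iic (0 : ℝ)).piecewise f g

section Glue

variable {α : Type*} {f g : ℝ → α} {t : ℝ}

lemma glue_of_nonpos (ht : t ≤ 0) : glue f g t = f t :=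
  piecewise_eq_of_mem _ _ _ ht

lemma glue_of_pos (ht : 0 < t) : glue f g t = g t :=
  piecewise_eq_of_notMem _ _ _ (not_le.2 ht)

lemma glue_eventuallyEq_atBot : glue f g =ᶠ[atBot] f :=
  (eventually_le_atBot 0).mono fun _ => glue_of_nonpos

lemma glue_eventuallyEq_atTop : glue f g =ᶠ[atTop] g :=
  (eventually_gt_atTop 0).mono fun _ => glue_of_pos

lemma glue_eventuallyEq_nhds_of_neg (ht : t < 0) : glue f g =ᶠ[𝓝 t] f :=
  eventually_of_mem (Iio_mem_nhds ht) fun _ hs => glue_of_nonpos (le_of_lt hs)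

lemma glue_eventuallyEq_nhds_of_pos (ht : 0 < t) : glue f g =ᶠ[𝓝 t] g :=
  eventually_of_mem (Ioi_mem_nhds ht) fun _ hs => glue_of_pos hs

lemma glue_neg (R : α → α) (hfg : ∀ t, g (-t) = R (f t)) (hgf : ∀ t, f (-t) = R (g t))
    (h0 : f 0 = g 0) (t : ℝ) : glue f g (-t) = R (glue f g t) := by
  rcases lt_trichotomy t 0 with ht | rfl | ht
  · rw [glue_of_pos (neg_pos.2 ht), glue_of_nonpos ht.le, hfg]
  · have hfix := hfg 0
    rw [neg_zero, ← h0] at hfix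
    rw [neg_zero, glue_of_nonpos le_rfl]
    exact hfix
  · rw [glue_of_nonpos (neg_nonpos.2 ht.le), glue_of_pos ht, hgf]

end Glue

section GluedCurves

variable {n : ℕ} {q p : ℝ → EuclideanSpace ℝ (Fin n)} {V : EuclideanSpace ℝ (Fin n) → ℝ}
  {a b c d : EuclideanSpace ℝ (Fin n)}

lemma deriv_glue_ae (q p : ℝ → EuclideanSpace ℝ (Fin n)) :
    deriv (glue q p) =ᵐ[volume] glue (deriv q) (deriv p) := by
  filter_upwards [Measure.ae_ne volume 0] with t ht
  rcases ht.lt_or_gt with ht | ht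
  · rw [(glue_eventuallyEq_nhds_of_neg ht).deriv_eq, glue_of_nonpos ht.le]
  · rw [(glue_eventuallyEq_nhds_of_pos ht).deriv_eq, glue_of_pos ht]

lemma Ed_glue_ae (V : EuclideanSpace ℝ (Fin n) → ℝ) (q p : ℝ → EuclideanSpace ℝ (Fin n)) :
    Ed V (glue q p) =ᵐ[volume] glue (Ed V q) (Ed V p) := by
  filter_upwards [deriv_glue_ae q p] with t ht
  rcases le_or_gt t 0 with ht₀ | ht₀
  · simp only [Ed, ht, glue_of_nonpos ht₀]
  · simp only [Ed, ht, glue_of_pos ht₀]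

lemma ac_glue (hq : AC q) (hp : AC p) (h0 : q 0 = p 0) : AC (glue q p) := by
  have hloc : LocallyIntegrable (deriv (glue q p)) volume := by
    refine LocallyIntegrable.congr ?_ (deriv_glue_ae q p).symm
    rw [glue, ← indicator_add_compl_eq_piecewise]
    exact (hq.1.indicator measurableSet_Iic).add (hp.1.indicator measurableSet_Iic.compl)
  have hfrom0 : ∀ b, glue q p b - glue q p 0 = ∫ t in (0 : ℝ)..b, deriv (glue q p) t := by
    intro b
    rw [glue_of_nonpos le_rfl]
    refine Eq.trans ?_ (integral_congr_ae ((deriv_glue_ae q p).mono fun t ht _ => ht.symm))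
    rcases le_or_gt b 0 with hb | hb
    · rw [glue_of_nonpos hb, hq.2]
      refine integral_congr fun t ht => (glue_of_nonpos ?_).symm
      exact (uIcc_of_ge hb ▸ ht).2
    · rw [glue_of_pos hb, h0, hp.2]
      refine integral_congr_ae (Eventually.of_forall fun t ht => (glue_of_pos ?_).symm)
      exact (uIoc_of_le hb.le ▸ ht).1
  have hii : ∀ a b : ℝ, IntervalIntegrable (deriv (glue q p)) volume a b := fun a b =>
    (hloc.integrableOn_isCompact isCompact_uIcc).intervalIntegrable
  refine ⟨hloc, fun a b => ?_⟩
  rw [← integral_interval_sub_left (hii 0 b) (hii 0 a), ← hfrom0, ← hfrom0]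
  abel

lemma finiteEnergy_glue (hq : FiniteEnergy V q) (hp : FiniteEnergy V p) :
    FiniteEnergy V (glue q p) :=
  (Integrable.piecewise measurableSet_Iic hq.integrableOn hp.integrableOn).congr
    (Ed_glue_ae V q p).symm

lemma energy_glue (hq : FiniteEnergy V q) (hp : FiniteEnergy V p) :
    Energy V (glue q p) = (∫ t in Iic 0, Ed V q t) + ∫ t in Ioi 0, Ed V p t := by
  rw [Energy, integral_congr_ae (Ed_glue_ae V q p), glue,
    integral_piecewise measurableSet_Iic hq.integrableOn hp.integrableOn, compl_Iic]

lemma inX_glue (hq : InX V a b q) (hp : InX V c d p) (h0 : q 0 = p 0) :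
    InX V a d (glue q p) :=
  ⟨ac_glue hq.1 hp.1 h0, finiteEnergy_glue hq.2.1 hp.2.1,
    hq.2.2.1.congr' glue_eventuallyEq_atBot.symm, hp.2.2.2.congr' glue_eventuallyEq_atTop.symm⟩

end GluedCurves

section TranslatedCurves

variable {n : ℕ} {q : ℝ → EuclideanSpace ℝ (Fin n)} {V : EuclideanSpace ℝ (Fin n) → ℝ}
  {a b : EuclideanSpace ℝ (Fin n)}

lemma Ed_comp_add_const (c t : ℝ) : Ed V (fun s => q (s + c)) t = Ed V q (t + c) := by
  rw [Ed, Ed, deriv_comp_add_const]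

lemma InX.comp_add_const (hq : InX V a b q) (c : ℝ) : InX V a b (fun t => q (t + c)) := by
  obtain ⟨hac, hfe, hbot, htop⟩ := hq
  refine ⟨hac.comp_add_const c, ?_, hbot.comp (tendsto_atBot_add_const_right _ c tendsto_id),
    htop.comp (tendsto_atTop_add_const_right _ c tendsto_id)⟩
  rw [FiniteEnergy, funext (Ed_comp_add_const c)]
  exact hfe.comp_add_right c

lemma energy_comp_add_const (c : ℝ) : Energy V (fun t => q (t + c)) = Energy V q := by
  simp_rw [Energy, Ed_comp_add_const]
  exact integral_add_right_eq_self _ c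

lemma InX.exists_apply_eq (hq : InX V a b q) (i : Fin n) {c : ℝ} (ha : a i < c) (hb : c < b i) :
    ∃ t, q t i = c := by
  have hi : Continuous fun u : EuclideanSpace ℝ (Fin n) => u i := PiLp.continuous_apply 2 _ i
  obtain ⟨t₁, ht₁⟩ := (((hi.tendsto a).comp hq.2.2.1).eventually (gt_mem_nhds ha)).exists
  obtain ⟨t₂, ht₂⟩ := (((hi.tendsto b).comp hq.2.2.2).eventually (lt_mem_nhds hb)).exists
  exact mem_range_of_exists_le_of_exists_ge (hi.comp hq.1.continuous) ⟨t₁, ht₁.le⟩ ⟨t₂, ht₂.le⟩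

end TranslatedCurves

section Mirror

variable {n : ℕ} {q : ℝ → EuclideanSpace ℝ (Fin n)} {V : EuclideanSpace ℝ (Fin n) → ℝ}
  {a b : EuclideanSpace ℝ (Fin n)}
  {R : EuclideanSpace ℝ (Fin n) ≃ₗᵢ[ℝ] EuclideanSpace ℝ (Fin n)}

def mirror (R : EuclideanSpace ℝ (Fin n) ≃ₗᵢ[ℝ] EuclideanSpace ℝ (Fin n))
    (q : ℝ → EuclideanSpace ℝ (Fin n)) : ℝ → EuclideanSpace ℝ (Fin n) :=
  fun t => R (q (-t))

lemma deriv_mirror (t : ℝ) : deriv (mirror R q) t = -R (deriv q (-t)) := by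
  change deriv (fun s => R.toContinuousLinearEquiv (q (-s))) t = _
  rw [deriv_continuousLinearEquiv_comp R.toContinuousLinearEquiv (fun s => q (-s)),
    deriv_comp_neg, map_neg]
  rfl

lemma Ed_mirror (hV : ∀ u, V (R u) = V u) (t : ℝ) : Ed V (mirror R q) t = Ed V q (-t) := by
  rw [Ed, Ed, deriv_mirror, norm_neg, LinearIsometryEquiv.norm_map, mirror, hV]

lemma inX_mirror (hV : ∀ u, V (R u) = V u) (hq : InX V a b q) :
    InX V (R b) (R a) (mirror R q) := by
  obtain ⟨hac, hfe, hbot, htop⟩ := hq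
  refine ⟨hac.comp_neg.continuousLinearEquiv_comp R.toContinuousLinearEquiv, ?_,
    (R.continuous.tendsto b).comp (htop.comp tendsto_neg_atBot_atTop),
    (R.continuous.tendsto a).comp (hbot.comp tendsto_neg_atTop_atBot)⟩
  rw [FiniteEnergy, funext (Ed_mirror hV)]
  exact hfe.comp_neg

lemma setIntegral_Iic_Ed_mirror (hV : ∀ u, V (R u) = V u) :
    ∫ t in Iic 0, Ed V (mirror R q) t = ∫ t in Ioi 0, Ed V q t := by
  simp_rw [Ed_mirror hV, integral_comp_neg_Iic, neg_zero]

lemma setIntegral_Ioi_Ed_mirror (hV : ∀ u, V (R u) = V u) :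
    ∫ t in Ioi 0, Ed V (mirror R q) t = ∫ t in Iic 0, Ed V q t := by
  simp_rw [Ed_mirror hV, integral_comp_neg_Ioi, neg_zero]

theorem InX.exists_symmetric_energy_le (hR : Function.Involutive R) (hV : ∀ u, V (R u) = V u)
    (hab : R a = b) (hq : InX V a b q) (h0 : R (q 0) = q 0) :
    ∃ qs, InX V a b qs ∧ (∀ t, qs (-t) = R (qs t)) ∧ Energy V qs ≤ Energy V q := by
  have hqm : InX V a b (mirror R q) := by
    simpa only [← hab, hR a] using inX_mirror hV hq
  have hm0 : q 0 = mirror R q 0 := by rw [mirror, neg_zero, h0]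
  have hm_neg : ∀ t, mirror R q (-t) = R (q t) := fun t => by rw [mirror, neg_neg]
  have hq_neg : ∀ t, q (-t) = R (mirror R q t) := fun t => (hR _).symm
  have hsplit : Energy V q = (∫ t in Iic 0, Ed V q t) + ∫ t in Ioi 0, Ed V q t := by
    rw [Energy, ← integral_add_compl measurableSet_Iic hq.2.1, compl_Iic]
  rcases le_total (∫ t in Iic 0, Ed V q t) (∫ t in Ioi 0, Ed V q t) with hle | hle
  · refine ⟨glue q (mirror R q), inX_glue hq hqm hm0, glue_neg R hm_neg hq_neg hm0, ?_⟩
    rw [energy_glue hq.2.1 hqm.2.1, setIntegral_Ioi_Ed_mirror hV, hsplit]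
    linarith
  · refine ⟨glue (mirror R q) q, inX_glue hqm hq hm0.symm,
      glue_neg R hq_neg hm_neg hm0.symm, ?_⟩
    rw [energy_glue hqm.2.1 hq.2.1, setIntegral_Iic_Ed_mirror hV, hsplit]
    linarith

end Mirror

lemma refl1_involutive : Function.Involutive (refl1 (k := k)) := fun u => by
  ext i
  by_cases hi : i = 0 <;> simp [refl1, hi]

lemma norm_refl1 (u : EuclideanSpace ℝ (Fin k)) : ‖refl1 u‖ = ‖u‖ := by
  simp only [EuclideanSpace.norm_eq]
  congr 1
  refine Finset.sum_congr rfl fun i _ => ?_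
  by_cases hi : i = 0 <;> simp [refl1, hi]

def refl1Equiv : EuclideanSpace ℝ (Fin k) ≃ₗᵢ[ℝ] EuclideanSpace ℝ (Fin k) where
  toFun := refl1
  invFun := refl1
  left_inv := refl1_involutive
  right_inv := refl1_involutive
  map_add' u v := by
    ext i
    by_cases hi : i = 0 <;> simp [refl1, hi, add_comm]
  map_smul' c u := by
    ext i
    by_cases hi : i = 0 <;> simp [refl1, hi]
  norm_map' := norm_refl1

lemma refl1_eq_self_iff {u : EuclideanSpace ℝ (Fin k)} : refl1 u = u ↔ u 0 = 0 := by
  refine ⟨fun h => ?_, fun h => ?_⟩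
  · have h0 := congrArg (· 0) h
    simp only [refl1, PiLp.toLp_apply, if_true] at h0
    linarith
  · ext i
    by_cases hi : i = 0 <;> simp [refl1, hi, h]

lemma refl1_neg_single :
    refl1 (-EuclideanSpace.single 0 1 : EuclideanSpace ℝ (Fin k)) = EuclideanSpace.single 0 1 := by
  ext i
  by_cases hi : i = 0 <;> simp [refl1, hi]

theorem stmt_10_general (V : EuclideanSpace ℝ (Fin k) → ℝ)
    (hsym : ∀ u, V (refl1 u) = V u)
    (σm σp : EuclideanSpace ℝ (Fin k))
    (hσm : σm = -EuclideanSpace.single 0 (1 : ℝ))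
    (hσp : σp = EuclideanSpace.single 0 (1 : ℝ))
    (q : ℝ → EuclideanSpace ℝ (Fin k)) (hq : InX V σm σp q) :
    ∃ qs : ℝ → EuclideanSpace ℝ (Fin k), InX V σm σp qs ∧
      (∀ t : ℝ, qs (-t) = refl1 (qs t)) ∧ Energy V qs ≤ Energy V q := by
  subst hσm hσp
  obtain ⟨t₀, ht₀⟩ := hq.exists_apply_eq 0 (c := 0) (by simp) (by simp)
  obtain ⟨qs, hqs, hsymm, hE⟩ := (hq.comp_add_const t₀).exists_symmetric_energy_le
    (R := refl1Equiv) refl1_involutive hsym refl1_neg_single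
    (refl1_eq_self_iff.2 (by rwa [zero_add]))
  exact ⟨qs, hqs, hsymm, hE.trans_eq (energy_comp_add_const t₀)⟩

theorem stmt_10 (V : EuclideanSpace ℝ (Fin k) → ℝ)
    (hV : ContDiff ℝ 2 V) (hVnn : ∀ u, 0 ≤ V u)
    (S : Set (EuclideanSpace ℝ (Fin k))) (hSfin : S.Finite)
    (hSzero : ∀ u, V u = 0 ↔ u ∈ S)
    (hhess : ∀ σ ∈ S, ∀ u : EuclideanSpace ℝ (Fin k), u ≠ 0 →
      0 < iteratedFDeriv ℝ 2 V σ ![u, u])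
    (α₀ β₀ R₀ : ℝ) (hα₀ : 0 < α₀) (hβ₀ : 0 < β₀) (hR₀ : 0 < R₀)
    (hcoer : ∀ u : EuclideanSpace ℝ (Fin k), R₀ ≤ ‖u‖ →
      α₀ * ‖u‖ ^ 2 ≤ ⟪gradient V u, u⟫ ∧ β₀ ≤ V u)
    (hsym : ∀ u, V (refl1 u) = V u)
    (σm σp : EuclideanSpace ℝ (Fin k))
    (hσm : σm = -EuclideanSpace.single 0 (1 : ℝ))
    (hσp : σp = EuclideanSpace.single 0 (1 : ℝ))
    (hσmS : σm ∈ S) (hσpS : σp ∈ S)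
    (q : ℝ → EuclideanSpace ℝ (Fin k)) (hq : InX V σm σp q) :
    ∃ qs : ℝ → EuclideanSpace ℝ (Fin k), InX V σm σp qs ∧
      (∀ t : ℝ, qs (-t) = refl1 (qs t)) ∧ Energy V qs ≤ Energy V q :=
  stmt_10_general V hsym σm σp hσm hσp q hq
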